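/- arXiv:2008.13394 — 2 statements merged into one kernel-verified Lean document; each statement's English description precedes it below -/
import Mathlib

section
/- For an orientable statistical manifold (M, g, ∇) with dual connection ∇*, the Ricci tensors satisfy (1/2)Ric(Y,Z) − (1/2)Ric*(Y,Z) = (div^∇̂ K)(Y,Z) − (∇̂_Y τ_g)(Z), where div^∇̂ K is the divergence of K with respect to the Levi-Civita connection and τ_g(X) = tr K_X. -/
open scoped BigOperators

namespace StatMfd

/-- Vector fields on an "abstract manifold": derivations of the algebra `A`
of smooth functions. -/
abbrev VF (A : Type*) [CommRing A] [Algebra ℝ A] := Derivation ℝ A A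

variable {A : Type*} [CommRing A] [Algebra ℝ A]

/-- An affine connection on vector fields. -/
structure Conn (A : Type*) [CommRing A] [Algebra ℝ A] where
  D : VF A → VF A → VF A
  add_left : ∀ X Y Z, D (X + Y) Z = D X Z + D Y Z
  smul_left : ∀ (f : A) (X Y), D (f • X) Y = f • D X Y
  add_right : ∀ X Y Z, D X (Y + Z) = D X Y + D X Z
  leibniz : ∀ (f : A) (X Y), D X (f • Y) = f • D X Y + (X f) • Y

/-- A pseudo-Riemannian metric: a symmetric nondegenerate `A`-bilinear form. -/
structure Metric (A : Type*) [CommRing A] [Algebra ℝ A] where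
  g : VF A → VF A → A
  add_left : ∀ X Y Z, g (X + Y) Z = g X Z + g Y Z
  smul_left : ∀ (f : A) (X Y), g (f • X) Y = f * g X Y
  symm : ∀ X Y, g X Y = g Y X
  nondeg : ∀ X, (∀ Y, g X Y = 0) → X = 0

/-- The connection `∇` is torsion free. -/
def TorsionFree (C : Conn A) : Prop := ∀ X Y, C.D X Y - C.D Y X = ⁅X, Y⁆

/-- The cubic form `C(X,Y,Z) = (∇_X g)(Y,Z)`. -/
def cubic (gm : Metric A) (C : Conn A) (X Y Z : VF A) : A :=
  X (gm.g Y Z) - gm.g (C.D X Y) Z - gm.g Y (C.D X Z)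

/-- Total symmetry of a `(0,3)`-tensor (valued in `A` or in vector fields). -/
def TotSym3 {B : Type*} (T : VF A → VF A → VF A → B) : Prop :=
  (∀ X Y Z, T X Y Z = T Y X Z) ∧ (∀ X Y Z, T X Y Z = T X Z Y)

/-- Total symmetry of a `(0,4)`-tensor. -/
def TotSym4 (T : VF A → VF A → VF A → VF A → A) : Prop :=
  (∀ X Y Z W, T X Y Z W = T Y X Z W) ∧ (∀ X Y Z W, T X Y Z W = T X Z Y W) ∧
    (∀ X Y Z W, T X Y Z W = T X Y W Z)

/-- `(g, ∇)` is a statistical structure. -/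
def IsStatistical (gm : Metric A) (C : Conn A) : Prop :=
  TorsionFree C ∧ TotSym3 (cubic gm C)

/-- `∇*` is the dual connection of `∇` with respect to `g`. -/
def IsDual (gm : Metric A) (C Cs : Conn A) : Prop :=
  ∀ X Y Z, X (gm.g Y Z) = gm.g (C.D X Y) Z + gm.g Y (Cs.D X Z)

/-- `h` is the Levi-Civita connection of `g`. -/
def IsLeviCivita (gm : Metric A) (h : Conn A) : Prop :=
  TorsionFree h ∧ ∀ X Y Z, X (gm.g Y Z) = gm.g (h.D X Y) Z + gm.g Y (h.D X Z)

/-- The difference tensor `K(X,Y) = ∇_X Y − ∇̂_X Y`. -/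
def Kdiff (C h : Conn A) (X Y : VF A) : VF A := C.D X Y - h.D X Y

/-- The curvature tensor of a connection. -/
def curv (C : Conn A) (X Y Z : VF A) : VF A :=
  C.D X (C.D Y Z) - C.D Y (C.D X Z) - C.D ⁅X, Y⁆ Z

/-- `(∇_X K)(Y,Z)` for a `(1,2)`-tensor `K`. -/
def covK (C : Conn A) (K : VF A → VF A → VF A) (X Y Z : VF A) : VF A :=
  C.D X (K Y Z) - K (C.D X Y) Z - K Y (C.D X Z)

/-- `(∇_X T)(Y,Z,W)` for a `(0,3)`-tensor `T`. -/
def covC (C : Conn A) (T : VF A → VF A → VF A → A) (X Y Z W : VF A) : A :=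
  X (T Y Z W) - T (C.D X Y) Z W - T Y (C.D X Z) W - T Y Z (C.D X W)

/-- `(∇_X T)(Y,Z)` for a `(0,2)`-tensor `T`. -/
def cov2 (C : Conn A) (T : VF A → VF A → A) (X Y Z : VF A) : A :=
  X (T Y Z) - T (C.D X Y) Z - T Y (C.D X Z)

/-- `(∇_X R)(Y,Z)W` for the curvature tensor of a connection. -/
def covR (C : Conn A) (X Y Z W : VF A) : VF A :=
  C.D X (curv C Y Z W) - curv C (C.D X Y) Z W - curv C Y (C.D X Z) W
    - curv C Y Z (C.D X W)

/-- A global frame of vector fields together with its dual coframe. -/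
structure Frame (A : Type*) [CommRing A] [Algebra ℝ A] (n : ℕ) where
  e : Fin n → VF A
  ε : Fin n → VF A → A
  ε_add : ∀ i X Y, ε i (X + Y) = ε i X + ε i Y
  ε_smul : ∀ i (f : A) X, ε i (f • X) = f * ε i X
  expand : ∀ X, X = ∑ i, ε i X • e i

/-- The Ricci curvature `Ric(Y,Z) = tr{X ↦ R(X,Y)Z}` computed in a frame. -/
def ricci {n : ℕ} (F : Frame A n) (C : Conn A) (Y Z : VF A) : A :=
  ∑ i, F.ε i (curv C (F.e i) Y Z)

/-- `τ_g(X) = tr K_X` computed in a frame. -/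
def tau {n : ℕ} (F : Frame A n) (K : VF A → VF A → VF A) (X : VF A) : A :=
  ∑ i, F.ε i (K X (F.e i))

/-- `(div^∇̂ K)(Y,Z)`, the trace of `V ↦ (∇̂_V K)(Y,Z)`, computed in a frame. -/
def divK {n : ℕ} (F : Frame A n) (h : Conn A) (K : VF A → VF A → VF A)
    (Y Z : VF A) : A :=
  ∑ i, F.ε i (covK h K (F.e i) Y Z)

/-- `(M,g,∇)` has constant curvature `k`. -/
def ConstCurv (gm : Metric A) (C : Conn A) (k : ℝ) : Prop :=
  ∀ X Y Z, curv C X Y Z = k • (gm.g Y Z • X - gm.g X Z • Y)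

/-- Projective flatness of a connection, via Eisenhart's characterization:
for `n = 2` total symmetry of `∇ Ric`, for `n ≥ 3` vanishing of the
projective curvature tensor. -/
def ProjFlat {n : ℕ} (F : Frame A n) (C : Conn A) : Prop :=
  (n = 2 ∧ TotSym3 (cov2 C (ricci F C))) ∨
    (3 ≤ n ∧ ∀ X Y Z, curv C X Y Z =
      ((n : ℝ) - 1)⁻¹ • (ricci F C Y Z • X - ricci F C X Z • Y))

/-!
Write `∇ = ∇̂ + K`. Total symmetry of the cubic form makes `K_X` self-adjoint for `g`, so
duality forces `∇* = ∇̂ − K`. Expanding both curvatures around `∇̂`, the terms quadratic in `K`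
cancel and `R(X,Y)Z − R*(X,Y)Z = 2 ((∇̂_X K)(Y,Z) − (∇̂_Y K)(X,Z))`. Tracing in `X`, the first
term gives `div^∇̂ K`, and the second gives `∇̂_Y τ_g` because the trace of an endomorphism field
commutes with covariant differentiation; this holds for any frame with dual coframe, since
`∑ ε_i ⊗ e_i` is the identity and hence parallel.
-/

lemma Conn.D_sub_right (C : Conn A) (X Y Z : VF A) :
    C.D X (Y - Z) = C.D X Y - C.D X Z :=
  (AddMonoidHom.mk' (C.D X) (C.add_right X)).map_sub Y Z

lemma Conn.D_sum_right (C : Conn A) (X : VF A) {ι : Type*} (s : Finset ι) (f : ι → VF A) :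
    C.D X (∑ i ∈ s, f i) = ∑ i ∈ s, C.D X (f i) :=
  map_sum (AddMonoidHom.mk' (C.D X) (C.add_right X)) f s

lemma Conn.D_sub_left (C : Conn A) (X Y Z : VF A) :
    C.D (X - Y) Z = C.D X Z - C.D Y Z :=
  (AddMonoidHom.mk' (C.D · Z) (C.add_left · · Z)).map_sub X Y

lemma Metric.sub_left (gm : Metric A) (X Y Z : VF A) :
    gm.g (X - Y) Z = gm.g X Z - gm.g Y Z :=
  (AddMonoidHom.mk' (gm.g · Z) (gm.add_left · · Z)).map_sub X Y

lemma Metric.sub_right (gm : Metric A) (X Y Z : VF A) :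
    gm.g X (Y - Z) = gm.g X Y - gm.g X Z := by
  rw [gm.symm, gm.sub_left, gm.symm Y, gm.symm Z]

def Frame.coord {n : ℕ} (F : Frame A n) (i : Fin n) : VF A →ₗ[A] A where
  toFun := F.ε i
  map_add' := F.ε_add i
  map_smul' := F.ε_smul i

@[simp]
lemma Frame.coord_apply {n : ℕ} (F : Frame A n) (i : Fin n) (X : VF A) :
    F.coord i X = F.ε i X :=
  rfl

section Kdiff

variable (C h : Conn A)

lemma Kdiff_comm (hC : TorsionFree C) (hh : TorsionFree h) (X Y : VF A) :
    Kdiff C h X Y = Kdiff C h Y X := by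
  rw [Kdiff, Kdiff, sub_eq_sub_iff_sub_eq_sub, hC, hh]

lemma Kdiff_sub_left (X Y Z : VF A) :
    Kdiff C h (X - Y) Z = Kdiff C h X Z - Kdiff C h Y Z := by
  simp only [Kdiff, C.D_sub_left, h.D_sub_left]; abel

lemma Kdiff_add_right (X Y Z : VF A) :
    Kdiff C h X (Y + Z) = Kdiff C h X Y + Kdiff C h X Z := by
  simp only [Kdiff, C.add_right, h.add_right]; abel

lemma Kdiff_sub_right (X Y Z : VF A) :
    Kdiff C h X (Y - Z) = Kdiff C h X Y - Kdiff C h X Z := by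
  simp only [Kdiff, C.D_sub_right, h.D_sub_right]; abel

lemma Kdiff_smul_right (f : A) (X Y : VF A) :
    Kdiff C h X (f • Y) = f • Kdiff C h X Y := by
  simp only [Kdiff, C.leibniz, h.leibniz, smul_sub]; abel

def kdiffEnd (X : VF A) : VF A →ₗ[A] VF A where
  toFun := Kdiff C h X
  map_add' := Kdiff_add_right C h X
  map_smul' f := Kdiff_smul_right C h f X

lemma curv_sub_curv_of_D_eq_sub_Kdiff {Cs : Conn A} (hh : TorsionFree h)
    (hCs : ∀ X Y, Cs.D X Y = h.D X Y - Kdiff C h X Y) (X Y Z : VF A) :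
    curv C X Y Z - curv Cs X Y Z =
      2 • (covK h (Kdiff C h) X Y Z - covK h (Kdiff C h) Y X Z) := by
  have hC : ∀ X Y, C.D X Y = h.D X Y + Kdiff C h X Y := fun X Y => (add_sub_cancel _ _).symm
  have hbracket : Kdiff C h ⁅X, Y⁆ Z = Kdiff C h (h.D X Y) Z - Kdiff C h (h.D Y X) Z := by
    rw [← Kdiff_sub_left, hh]
  simp only [curv, covK, hC, hCs, h.add_right, h.D_sub_right, Kdiff_add_right,
    Kdiff_sub_right, hbracket]
  abel

end Kdiff

section Statistical

variable {gm : Metric A} {C h : Conn A}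

lemma totSym3_metric_Kdiff (hstat : IsStatistical gm C) (hLC : IsLeviCivita gm h) :
    TotSym3 (fun X Y Z => gm.g (Kdiff C h X Y) Z) := by
  have hcubic : ∀ X Y Z, cubic gm C X Y Z = -gm.g (Kdiff C h X Y) Z - gm.g (Kdiff C h X Z) Y := by
    intro X Y Z
    simp only [cubic, Kdiff, gm.sub_left, hLC.2 X Y Z, gm.symm (C.D X Z) Y, gm.symm (h.D X Z) Y]
    ring
  have hK := Kdiff_comm C h hstat.1 hLC.1
  have h13 : ∀ X Y Z, gm.g (Kdiff C h X Y) Z = gm.g (Kdiff C h Z Y) X := by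
    intro X Y Z
    have hswap := hstat.2.1 X Z Y
    rw [hcubic, hcubic, hK Z X] at hswap
    linear_combination -hswap
  exact ⟨fun X Y Z => by dsimp only; rw [hK], fun X Y Z => by dsimp only; rw [hK, h13, hK]⟩

lemma metric_Kdiff_left_eq_right (hstat : IsStatistical gm C) (hLC : IsLeviCivita gm h)
    (X Y Z : VF A) : gm.g (Kdiff C h X Y) Z = gm.g Y (Kdiff C h X Z) :=
  ((totSym3_metric_Kdiff hstat hLC).2 X Y Z).trans (gm.symm _ _)

lemma IsDual.D_eq_sub_Kdiff {Cs : Conn A} (hdual : IsDual gm C Cs)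
    (hstat : IsStatistical gm C) (hLC : IsLeviCivita gm h) (X Z : VF A) :
    Cs.D X Z = h.D X Z - Kdiff C h X Z := by
  rw [← sub_eq_zero]
  refine gm.nondeg _ fun Y => ?_
  have hK := metric_Kdiff_left_eq_right hstat hLC X Y Z
  rw [Kdiff, gm.sub_left] at hK
  rw [gm.symm, gm.sub_right, gm.sub_right]
  linear_combination hLC.2 X Y Z - hdual X Y Z - hK

end Statistical

section Trace

variable {n : ℕ} (F : Frame A n)

lemma Frame.sum_coord_map_sum_smul {ι : Type*} [Fintype ι] (φ : ι → VF A →ₗ[A] A)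
    (v : ι → VF A) (T : VF A →ₗ[A] VF A) :
    ∑ j, F.coord j (T (∑ i, φ i (F.e j) • v i)) = ∑ i, φ i (T (v i)) := by
  conv_rhs => enter [2, i]; rw [F.expand (T (v i))]
  simp only [map_sum, map_smul, ← F.coord_apply, smul_eq_mul]
  rw [Finset.sum_comm]
  exact Finset.sum_congr rfl fun _ _ => Finset.sum_congr rfl fun _ _ => mul_comm _ _

/-- The covariant derivative `∇_Y ε_i` of the coframe. -/
def Frame.coordCov (D : Conn A) (Y : VF A) (i : Fin n) : VF A →ₗ[A] A where
  toFun X := Y (F.ε i X) - F.ε i (D.D Y X)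
  map_add' X X' := by simp only [F.ε_add, D.add_right, map_add]; ring
  map_smul' f X := by
    simp only [F.ε_smul, D.leibniz, F.ε_add, Derivation.leibniz, smul_eq_mul,
      RingHom.id_apply]
    ring

lemma Frame.sum_coordCov_smul_add (D : Conn A) (Y X : VF A) :
    ∑ i, F.coordCov D Y i X • F.e i + ∑ i, F.ε i X • D.D Y (F.e i) = 0 := by
  have hD : D.D Y X = ∑ i, (F.ε i X • D.D Y (F.e i) + Y (F.ε i X) • F.e i) := by
    conv_lhs => rw [F.expand X]
    rw [D.D_sum_right]
    exact Finset.sum_congr rfl fun i _ => D.leibniz _ _ _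
  have hexp := F.expand (D.D Y X)
  simp only [Frame.coordCov, LinearMap.coe_mk, AddHom.coe_mk, sub_smul, Finset.sum_sub_distrib]
  rw [← hexp, hD, Finset.sum_add_distrib]
  abel

lemma Frame.sum_ε_D_sub_map_D (D : Conn A) (Y : VF A) (T : VF A →ₗ[A] VF A) :
    ∑ i, F.ε i (D.D Y (T (F.e i)) - T (D.D Y (F.e i))) = Y (∑ i, F.ε i (T (F.e i))) := by
  have hcoordCov : ∑ i, F.coordCov D Y i (T (F.e i)) = -∑ i, F.ε i (T (D.D Y (F.e i))) := by
    have hid : ∀ j, ∑ i, F.coordCov D Y i (F.e j) • F.e i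
        + ∑ i, F.coord i (F.e j) • D.D Y (F.e i) = 0 :=
      fun j => F.sum_coordCov_smul_add D Y (F.e j)
    have h0 := congrArg (fun v : Fin n → VF A => ∑ j, F.coord j (T (v j))) (funext hid)
    simp only [map_add, map_zero, Finset.sum_const_zero, Finset.sum_add_distrib] at h0
    rw [F.sum_coord_map_sum_smul, F.sum_coord_map_sum_smul] at h0
    simp only [F.coord_apply] at h0
    linear_combination h0
  simp only [Frame.coordCov, LinearMap.coe_mk, AddHom.coe_mk, Finset.sum_sub_distrib] at hcoordCov
  simp only [← F.coord_apply, map_sub, Finset.sum_sub_distrib, map_sum]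
  simp only [F.coord_apply]
  linear_combination -hcoordCov

end Trace

section Ricci

variable {n : ℕ} (F : Frame A n) (C h : Conn A)

lemma sum_ε_covK_Kdiff (hC : TorsionFree C) (hh : TorsionFree h) (Y Z : VF A) :
    ∑ i, F.ε i (covK h (Kdiff C h) Y (F.e i) Z) =
      Y (tau F (Kdiff C h) Z) - tau F (Kdiff C h) (h.D Y Z) := by
  have hK := Kdiff_comm C h hC hh
  have hcovK : ∀ i, covK h (Kdiff C h) Y (F.e i) Z =
      (h.D Y (kdiffEnd C h Z (F.e i)) - kdiffEnd C h Z (h.D Y (F.e i)))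
        - Kdiff C h (h.D Y Z) (F.e i) := fun i => by
    simp only [covK, kdiffEnd, LinearMap.coe_mk, AddHom.coe_mk, hK (F.e i), hK (h.D Y (F.e i))]
  have htrace := F.sum_ε_D_sub_map_D h Y (kdiffEnd C h Z)
  simp only [hcovK, ← F.coord_apply, map_sub, Finset.sum_sub_distrib] at htrace ⊢
  simp only [tau, kdiffEnd, LinearMap.coe_mk, AddHom.coe_mk, F.coord_apply] at htrace ⊢
  linear_combination htrace

lemma ricci_sub_ricci_of_D_eq_sub_Kdiff {Cs : Conn A} (hh : TorsionFree h)
    (hCs : ∀ X Y, Cs.D X Y = h.D X Y - Kdiff C h X Y) (Y Z : VF A) :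
    ricci F C Y Z - ricci F Cs Y Z =
      2 • (divK F h (Kdiff C h) Y Z - ∑ i, F.ε i (covK h (Kdiff C h) Y (F.e i) Z)) := by
  simp only [ricci, divK, ← F.coord_apply, ← Finset.sum_sub_distrib, ← map_sub,
    curv_sub_curv_of_D_eq_sub_Kdiff C h hh hCs, map_nsmul, Finset.smul_sum]

end Ricci

theorem stmt13_general {n : ℕ} (gm : Metric A) (C Cs h : Conn A) (F : Frame A n)
    (hstat : IsStatistical gm C) (hLC : IsLeviCivita gm h)
    (hdual : IsDual gm C Cs) :
    ∀ Y Z, ((1 : ℝ)/2) • ricci F C Y Z - ((1 : ℝ)/2) • ricci F Cs Y Z =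
      divK F h (Kdiff C h) Y Z -
        (Y (tau F (Kdiff C h) Z) - tau F (Kdiff C h) (h.D Y Z)) := by
  intro Y Z
  rw [← smul_sub, ricci_sub_ricci_of_D_eq_sub_Kdiff F C h hLC.1 (hdual.D_eq_sub_Kdiff hstat hLC),
    sum_ε_covK_Kdiff F C h hstat.1 hLC.1, ← Nat.cast_smul_eq_nsmul ℝ, smul_smul]
  norm_num

/-- `(1/2)Ric(Y,Z) − (1/2)Ric*(Y,Z) = (div^∇̂ K)(Y,Z) − (∇̂_Y τ_g)(Z)`. -/
theorem stmt13 {n : ℕ} (gm : Metric A) (C Cs h : Conn A) (F : Frame A n)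
    (hstat : IsStatistical gm C) (hLC : IsLeviCivita gm h)
    (hTs : TorsionFree Cs) (hdual : IsDual gm C Cs) :
    ∀ Y Z, ((1 : ℝ)/2) • ricci F C Y Z - ((1 : ℝ)/2) • ricci F Cs Y Z =
      divK F h (Kdiff C h) Y Z -
        (Y (tau F (Kdiff C h) Z) - tau F (Kdiff C h) (h.D Y Z)) :=
  stmt13_general gm C Cs h F hstat hLC hdual

end StatMfd
end

section
/- Let (M, g, ∇) be a statistical manifold and S the (1,1)-tensor defined by Ric(X,Y) = (n−1) g(SX, Y). Assume Ric is symmetric and ∇Ric is totally symmetric. If there is a smooth function λ on M with SY = λY for all vector fields Y, then λ is constant. -/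
open scoped BigOperators

namespace StatMfd

variable {A : Type*} [CommRing A] [Algebra ℝ A]

/-! With `μ = (n - 1) λ`, the total symmetry of `∇Ric`, `Ric = μ g` and the symmetry of the
cubic form give `(Xμ) Y = (Yμ) X` for all vector fields `X, Y`. Where the tangent module has rank
at least two this forces `Xμ = 0`; where it has rank at most one the curvature, being skew,
vanishes, and so does `μ`. Algebraically, the rank-`≥ 2` part is detected by the ideal of `2 × 2`
minors of the idempotent matrix `(εᵢ(eⱼ))` of the frame: this ideal is idempotent and finitely
generated, hence generated by an idempotent `e`. `Xμ` annihilates the minors, hence `e`, while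
`Ric` lies in the ideal, so `(1 - e) μ` annihilates every vector field; differentiating and
taking a trace gives `(1 - e) Xμ = 0`. -/

section TwoMinors

variable {ι R : Type*} [CommRing R]

def twoMinor (P : Matrix ι ι R) (l m i j : ι) : R := P l i * P m j - P m i * P l j

def twoMinorIdeal (P : Matrix ι ι R) : Ideal R :=
  Ideal.span (Set.range fun q : ι × ι × ι × ι => twoMinor P q.1 q.2.1 q.2.2.1 q.2.2.2)

lemma twoMinor_mem_twoMinorIdeal (P : Matrix ι ι R) (l m i j : ι) :
    twoMinor P l m i j ∈ twoMinorIdeal P :=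
  Ideal.subset_span ⟨(l, m, i, j), rfl⟩

lemma twoMinorIdeal_fg [Finite ι] (P : Matrix ι ι R) : (twoMinorIdeal P).FG :=
  Submodule.fg_span (Set.finite_range _)

-- Cauchy–Binet for `2 × 2` minors; the `2` counts each unordered pair `{a, b}` twice.
lemma two_mul_twoMinor [Fintype ι] {P : Matrix ι ι R} (hP : IsIdempotentElem P) (l m i j : ι) :
    2 * twoMinor P l m i j = ∑ a, ∑ b, twoMinor P l m a b * twoMinor P a b i j := by
  have hP' : ∀ x y, ∑ a, P x a * P a y = P x y := fun x y => by
    rw [← Matrix.mul_apply, hP.eq]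
  have hprod : ∀ x y z w,
      ∑ a, ∑ b, P x a * P a y * (P z b * P b w) = P x y * P z w := fun x y z w => by
    rw [← Finset.sum_mul_sum, hP', hP']
  calc 2 * twoMinor P l m i j
      = P l i * P m j - P l j * P m i - P m i * P l j + P m j * P l i := by
        unfold twoMinor; ring
    _ = ∑ a, ∑ b, (P l a * P a i * (P m b * P b j) - P l a * P a j * (P m b * P b i)
          - P m a * P a i * (P l b * P b j) + P m a * P a j * (P l b * P b i)) := by
        simp only [Finset.sum_add_distrib, Finset.sum_sub_distrib, hprod]
    _ = ∑ a, ∑ b, twoMinor P l m a b * twoMinor P a b i j := by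
        refine Finset.sum_congr rfl fun a _ => Finset.sum_congr rfl fun b _ => ?_
        unfold twoMinor; ring

lemma twoMinorIdeal_le_mul_self [Fintype ι] (h2 : IsUnit (2 : R)) {P : Matrix ι ι R}
    (hP : IsIdempotentElem P) : twoMinorIdeal P ≤ twoMinorIdeal P * twoMinorIdeal P := by
  rw [twoMinorIdeal, Ideal.span_le]
  rintro _ ⟨⟨l, m, i, j⟩, rfl⟩
  rw [SetLike.mem_coe, ← Ideal.unit_mul_mem_iff_mem _ h2, two_mul_twoMinor hP]
  exact Ideal.sum_mem _ fun a _ => Ideal.sum_mem _ fun b _ =>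
    Ideal.mul_mem_mul (twoMinor_mem_twoMinorIdeal P l m a b) (twoMinor_mem_twoMinorIdeal P a b i j)

lemma sum_mul_mem_twoMinorIdeal [Fintype ι] (h2 : IsUnit (2 : R)) (P : Matrix ι ι R)
    (B : ι → ι → R) (hB : ∀ l m, B m l = -B l m) (i j : ι) :
    ∑ l, ∑ m, P l i * P m j * B l m ∈ twoMinorIdeal P := by
  have hswap : ∑ l, ∑ m, P l i * P m j * B l m = -∑ l, ∑ m, P m i * P l j * B l m := by
    rw [Finset.sum_comm, ← Finset.sum_neg_distrib]
    refine Finset.sum_congr rfl fun l _ => ?_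
    rw [← Finset.sum_neg_distrib]
    refine Finset.sum_congr rfl fun m _ => ?_
    rw [hB]; ring
  have htwo : 2 * ∑ l, ∑ m, P l i * P m j * B l m = ∑ l, ∑ m, twoMinor P l m i j * B l m := by
    conv_lhs => rw [two_mul]; arg 2; rw [hswap]
    simp only [twoMinor, sub_mul, Finset.sum_sub_distrib, ← sub_eq_add_neg]
  rw [← Ideal.unit_mul_mem_iff_mem _ h2, htwo]
  exact Ideal.sum_mem _ fun l _ => Ideal.sum_mem _ fun m _ =>
    Ideal.mul_mem_right _ _ (twoMinor_mem_twoMinorIdeal P l m i j)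

end TwoMinors

lemma derivation_apply_eq_zero_of_isIdempotentElem (X : VF A) {e : A}
    (he : IsIdempotentElem e) : X e = 0 := by
  have h : X e = 2 * e * X e := by
    conv_lhs => rw [← he.eq]
    rw [Derivation.leibniz, smul_eq_mul]; ring
  linear_combination (1 - 2 * e) * h - 4 * X e * he.eq

lemma smul_lie_eq (a : A) (X Y : VF A) : ⁅a • X, Y⁆ = a • ⁅X, Y⁆ - Y a • X := by
  ext b
  simp only [Derivation.commutator_apply, Derivation.sub_apply, Derivation.smul_apply,
    smul_eq_mul, Derivation.leibniz]
  ring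

lemma apply_smul_eq_zero_of_forall_smul_eq_zero {a : A} (ha : ∀ Y : VF A, a • Y = 0)
    (X Y : VF A) : X a • Y = 0 := by
  have hzero : ∀ (Y : VF A) (b : A), a * Y b = 0 := fun Y b => by
    simpa using congrArg (fun D : VF A => D b) (ha Y)
  ext b
  have h := congrArg X (hzero Y b)
  rw [Derivation.leibniz, smul_eq_mul, smul_eq_mul, hzero X, map_zero, zero_add] at h
  simpa [mul_comm] using h

namespace Conn

variable (C : Conn A)

lemma D_sub_left_s16 (X X' Z : VF A) : C.D (X - X') Z = C.D X Z - C.D X' Z := by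
  rw [eq_sub_iff_add_eq, ← C.add_left, sub_add_cancel]

lemma D_neg_left (X Z : VF A) : C.D (-X) Z = -C.D X Z := by
  rw [← neg_one_smul A X, C.smul_left, neg_one_smul]

end Conn

section Curvature

variable (C : Conn A)

lemma curv_swap (X Y Z : VF A) : curv C Y X Z = -curv C X Y Z := by
  rw [curv, curv, ← lie_skew, C.D_neg_left]; abel

def curvLeft (Y Z : VF A) : VF A →ₗ[A] VF A where
  toFun X := curv C X Y Z
  map_add' X X' := by
    simp only [curv, C.add_left, add_lie, C.add_right]; abel
  map_smul' a X := by
    simp only [curv, C.smul_left, C.leibniz, smul_lie_eq, C.D_sub_left_s16, RingHom.id_apply,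
      smul_sub]
    abel

@[simp]
lemma curvLeft_apply (X Y Z : VF A) : curvLeft C Y Z X = curv C X Y Z := rfl

def curvMid (X Z : VF A) : VF A →ₗ[A] VF A := -curvLeft C X Z

@[simp]
lemma curvMid_apply (X Y Z : VF A) : curvMid C X Z Y = curv C X Y Z := by
  rw [curvMid, LinearMap.neg_apply, curvLeft_apply, curv_swap, neg_neg]

lemma curv_sum_smul_left {ι : Type*} (s : Finset ι) (c : ι → A) (w : ι → VF A) (Y Z : VF A) :
    curv C (∑ i ∈ s, c i • w i) Y Z = ∑ i ∈ s, c i • curv C (w i) Y Z := by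
  rw [← curvLeft_apply, map_sum]
  simp only [map_smul, curvLeft_apply]

lemma curv_sum_smul_mid {ι : Type*} (s : Finset ι) (c : ι → A) (w : ι → VF A) (X Z : VF A) :
    curv C X (∑ i ∈ s, c i • w i) Z = ∑ i ∈ s, c i • curv C X (w i) Z := by
  rw [← curvMid_apply, map_sum]
  simp only [map_smul, curvMid_apply]

end Curvature

lemma isUnit_two_of_real : IsUnit (2 : A) := by
  have h := (IsUnit.mk0 (2 : ℝ) two_ne_zero).map (algebraMap ℝ A)
  rwa [map_ofNat] at h

namespace Frame

variable {n : ℕ} (F : Frame A n)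

def coord_s16 (i : Fin n) : VF A →ₗ[A] A where
  toFun := F.ε i
  map_add' := F.ε_add i
  map_smul' := F.ε_smul i

@[simp]
lemma coord_apply_s16 (i : Fin n) (X : VF A) : F.coord_s16 i X = F.ε i X := rfl

lemma ε_sum_smul (i : Fin n) {ι : Type*} (s : Finset ι) (c : ι → A) (w : ι → VF A) :
    F.ε i (∑ x ∈ s, c x • w x) = ∑ x ∈ s, c x * F.ε i (w x) := by
  rw [← coord_apply_s16, map_sum]
  simp only [map_smul, coord_apply_s16, smul_eq_mul]

lemma ε_neg (i : Fin n) (X : VF A) : F.ε i (-X) = -F.ε i X :=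
  map_neg (F.coord_s16 i) X

lemma apply_eq_sum (X : VF A) (b : A) : X b = ∑ i, F.ε i X * F.e i b := by
  conv_lhs => rw [F.expand X]
  rw [← Derivation.coeFnAddMonoidHom_apply, map_sum, Finset.sum_apply]
  simp only [Derivation.coeFnAddMonoidHom_apply, Derivation.smul_apply, smul_eq_mul]

def coordMatrix : Matrix (Fin n) (Fin n) A := Matrix.of fun i j => F.ε i (F.e j)

lemma isIdempotentElem_coordMatrix : IsIdempotentElem F.coordMatrix := by
  ext i j
  simp only [Matrix.mul_apply, coordMatrix, Matrix.of_apply]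
  conv_rhs => rw [F.expand (F.e j), ε_sum_smul]
  exact Finset.sum_congr rfl fun a _ => mul_comm _ _

lemma mul_trace_coordMatrix_eq_zero {a : A} (ha : ∀ Y : VF A, a • Y = 0) :
    a * F.coordMatrix.trace = 0 := by
  simp only [Matrix.trace, Matrix.diag, coordMatrix, Matrix.of_apply, Finset.mul_sum,
    ← F.ε_smul, ha]
  exact Finset.sum_eq_zero fun i _ => map_zero (F.coord_s16 i)

section SymmetricGradient

variable {μ : A}

lemma apply_mul_ε_comm (hμ : ∀ W Y : VF A, W μ • Y = Y μ • W) (W Y : VF A) (i : Fin n) :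
    W μ * F.ε i Y = Y μ * F.ε i W := by
  rw [← F.ε_smul, ← F.ε_smul, hμ]

lemma apply_mul_trace_coordMatrix (hμ : ∀ W Y : VF A, W μ • Y = Y μ • W) (X : VF A) :
    X μ * F.coordMatrix.trace = X μ := by
  calc X μ * F.coordMatrix.trace = ∑ i, X μ * F.ε i (F.e i) := Finset.mul_sum _ _ _
    _ = ∑ i, F.ε i X * F.e i μ := Finset.sum_congr rfl fun i _ => by
        rw [F.apply_mul_ε_comm hμ, mul_comm]
    _ = X μ := (F.apply_eq_sum X μ).symm

lemma apply_mul_twoMinor_coordMatrix_eq_zero (hμ : ∀ W Y : VF A, W μ • Y = Y μ • W)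
    (W : VF A) (l m i j : Fin n) : W μ * twoMinor F.coordMatrix l m i j = 0 := by
  simp only [twoMinor, coordMatrix, Matrix.of_apply]
  linear_combination F.ε m (F.e j) * F.apply_mul_ε_comm hμ W (F.e i) l
    + F.ε l W * F.apply_mul_ε_comm hμ (F.e i) (F.e j) m
    + F.ε m (F.e i) * F.apply_mul_ε_comm hμ (F.e j) W l

lemma apply_mul_eq_zero_of_mem_twoMinorIdeal (hμ : ∀ W Y : VF A, W μ • Y = Y μ • W)
    (W : VF A) {x : A} (hx : x ∈ twoMinorIdeal F.coordMatrix) : W μ * x = 0 := by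
  have hle : twoMinorIdeal F.coordMatrix ≤ LinearMap.ker (LinearMap.mulLeft A (W μ)) :=
    Ideal.span_le.mpr <| by
      rintro _ ⟨⟨l, m, i, j⟩, rfl⟩
      exact F.apply_mul_twoMinor_coordMatrix_eq_zero hμ W l m i j
  exact hle hx

end SymmetricGradient

end Frame

section Ricci

variable {n : ℕ} (F : Frame A n) (C : Conn A)

lemma ricci_frame_mem_twoMinorIdeal (j : Fin n) (Z : VF A) :
    ricci F C (F.e j) Z ∈ twoMinorIdeal F.coordMatrix := by
  refine Ideal.sum_mem _ fun i _ => ?_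
  have hexpand : F.ε i (curv C (F.e i) (F.e j) Z) = ∑ l, ∑ m,
      F.coordMatrix l i * F.coordMatrix m j * F.ε i (curv C (F.e l) (F.e m) Z) := by
    conv_lhs => rw [F.expand (F.e i), curv_sum_smul_left, F.ε_sum_smul]
    refine Finset.sum_congr rfl fun l _ => ?_
    conv_lhs => rw [F.expand (F.e j), curv_sum_smul_mid, F.ε_sum_smul, Finset.mul_sum]
    refine Finset.sum_congr rfl fun m _ => ?_
    simp only [Frame.coordMatrix, Matrix.of_apply]; ring
  rw [hexpand]
  exact sum_mul_mem_twoMinorIdeal isUnit_two_of_real _ _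
    (fun l m => by rw [curv_swap, F.ε_neg]) i j

lemma ricci_eq_sum_ε_mul (Y Z : VF A) :
    ricci F C Y Z = ∑ j, F.ε j Y * ricci F C (F.e j) Z := by
  simp only [ricci, Finset.mul_sum]
  rw [Finset.sum_comm]
  refine Finset.sum_congr rfl fun i _ => ?_
  conv_lhs => rw [F.expand Y, curv_sum_smul_mid, F.ε_sum_smul]

lemma ricci_mem_twoMinorIdeal (Y Z : VF A) : ricci F C Y Z ∈ twoMinorIdeal F.coordMatrix := by
  rw [ricci_eq_sum_ε_mul]
  exact Ideal.sum_mem _ fun j _ => Ideal.mul_mem_left _ _ (ricci_frame_mem_twoMinorIdeal F C j Z)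

end Ricci

section MetricMultiple

variable (gm : Metric A) (C : Conn A)

lemma Metric.g_sub_left (X X' Z : VF A) : gm.g (X - X') Z = gm.g X Z - gm.g X' Z := by
  rw [eq_sub_iff_add_eq, ← gm.add_left, sub_add_cancel]

lemma Metric.smul_eq_zero_of_mul_eq_zero {a : A} (ha : ∀ Y Z, a * gm.g Y Z = 0) (Y : VF A) :
    a • Y = 0 :=
  gm.nondeg _ fun Z => by rw [gm.smul_left, ha]

lemma cov2_mul_metric (μ : A) (W Y Z : VF A) :
    cov2 C (fun Y Z => μ * gm.g Y Z) W Y Z = W μ * gm.g Y Z + μ * cubic gm C W Y Z := by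
  simp only [cov2, cubic, Derivation.leibniz, smul_eq_mul]; ring

lemma apply_smul_comm_of_cov2_mul_metric_comm {μ : A}
    (hcubic : ∀ X Y Z, cubic gm C X Y Z = cubic gm C Y X Z)
    (hcov : ∀ X Y Z, cov2 C (fun Y Z => μ * gm.g Y Z) X Y Z
      = cov2 C (fun Y Z => μ * gm.g Y Z) Y X Z)
    (W Y : VF A) : W μ • Y = Y μ • W := by
  rw [← sub_eq_zero]
  refine gm.nondeg _ fun Z => ?_
  have h := hcov W Y Z
  rw [cov2_mul_metric, cov2_mul_metric, hcubic] at h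
  rw [gm.g_sub_left, gm.smul_left, gm.smul_left]
  linear_combination h

end MetricMultiple

theorem apply_eq_zero_of_ricci_eq_mul_metric {n : ℕ} (gm : Metric A) (C : Conn A)
    (F : Frame A n) (hcubic : ∀ X Y Z, cubic gm C X Y Z = cubic gm C Y X Z) {μ : A}
    (hRic : ∀ Y Z, ricci F C Y Z = μ * gm.g Y Z)
    (hDRic : ∀ X Y Z, cov2 C (ricci F C) X Y Z = cov2 C (ricci F C) Y X Z) (X : VF A) :
    X μ = 0 := by
  have hRic' : ricci F C = fun Y Z => μ * gm.g Y Z := funext₂ hRic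
  rw [hRic'] at hDRic
  have hμ := apply_smul_comm_of_cov2_mul_metric_comm gm C hcubic hDRic
  obtain ⟨e, heI, he⟩ := Submodule.exists_mem_and_smul_eq_self_of_fg_of_le_smul
    (twoMinorIdeal F.coordMatrix) _ (twoMinorIdeal_fg _) <| by
      rw [smul_eq_mul]
      exact twoMinorIdeal_le_mul_self isUnit_two_of_real F.isIdempotentElem_coordMatrix
  have hXe : X μ * e = 0 := F.apply_mul_eq_zero_of_mem_twoMinorIdeal hμ X heI
  have hidem : IsIdempotentElem (1 - e) := IsIdempotentElem.one_sub (he e heI)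
  have hkill : ∀ Y : VF A, ((1 - e) * μ) • Y = 0 :=
    gm.smul_eq_zero_of_mul_eq_zero fun Y Z => by
      rw [mul_assoc, ← hRic, sub_mul, one_mul, ← smul_eq_mul,
        he _ (ricci_mem_twoMinorIdeal F C Y Z), sub_self]
  have hX : X ((1 - e) * μ) = (1 - e) * X μ := by
    rw [Derivation.leibniz, derivation_apply_eq_zero_of_isIdempotentElem X hidem, smul_zero,
      add_zero, smul_eq_mul]
  have hrest : (1 - e) * X μ = 0 := by
    rw [← F.apply_mul_trace_coordMatrix hμ X, ← mul_assoc, ← hX]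
    exact F.mul_trace_coordMatrix_eq_zero (apply_smul_eq_zero_of_forall_smul_eq_zero hkill X)
  linear_combination hrest + hXe

theorem stmt16_general {n : ℕ} (hn : 2 ≤ n) (gm : Metric A) (C : Conn A)
    (F : Frame A n) (hstat : IsStatistical gm C)
    (S : VF A → VF A) (lam : A)
    (hS : ∀ X Y, ricci F C X Y = ((n : A) - 1) * gm.g (S X) Y)
    (hDRic : TotSym3 (cov2 C (ricci F C)))
    (hlam : ∀ Y, S Y = lam • Y) :
    ∀ X : VF A, X lam = 0 := by
  intro X
  have hc : ((n : ℝ) - 1) ≠ 0 := by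
    have : (2 : ℝ) ≤ n := by exact_mod_cast hn
    linarith
  have hRic : ∀ Y Z, ricci F C Y Z = (((n : ℝ) - 1) • lam) * gm.g Y Z := fun Y Z => by
    rw [hS, hlam, gm.smul_left, Algebra.smul_def, map_sub, map_natCast, map_one, mul_assoc]
  have h := apply_eq_zero_of_ricci_eq_mul_metric gm C F hstat.2.1 hRic hDRic.1 X
  rw [Derivation.map_smul] at h
  exact (smul_eq_zero.mp h).resolve_left hc

/-- if `Ric = (n−1) g(S·,·)` is symmetric, `∇Ric` is totally
symmetric and `S = λ·id` for a function `λ`, then `λ` is constant. -/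
theorem stmt16 {n : ℕ} (hn : 2 ≤ n) (gm : Metric A) (C : Conn A)
    (F : Frame A n) (hstat : IsStatistical gm C)
    (S : VF A → VF A) (lam : A)
    (hS : ∀ X Y, ricci F C X Y = ((n : A) - 1) * gm.g (S X) Y)
    (hRicSymm : ∀ X Y, ricci F C X Y = ricci F C Y X)
    (hDRic : TotSym3 (cov2 C (ricci F C)))
    (hlam : ∀ Y, S Y = lam • Y) :
    ∀ X : VF A, X lam = 0 :=
  stmt16_general hn gm C F hstat S lam hS hDRic hlam

end StatMfd
end
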